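/- Let x and y be future-pointing spacelike vectors in the Minkowskian plane L². Then x + y is a future-pointing spacelike vector, the reversed triangle inequality ‖x + y‖_h ≥ ‖x‖_h + ‖y‖_h holds, and equality holds if and only if y = c·x for some real number c > 0. -/

import Mathlib

/-- The hyperbolic (Minkowskian) norm on ℝ². -/
noncomputable def hnorm (p : ℝ × ℝ) : ℝ := Real.sqrt |p.1 ^ 2 - p.2 ^ 2|

/-- A vector of the Minkowskian plane is future-pointing spacelike. -/
def FutureSpacelike (p : ℝ × ℝ) : Prop := 0 < p.1 ^ 2 - p.2 ^ 2 ∧ 0 < p.1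

/-!
The whole argument is the reversed Cauchy–Schwarz inequality `‖x‖_h ‖y‖_h ≤ ⟨x, y⟩` for
future-pointing spacelike vectors, which comes from the Lagrange-type identity
`⟨x, y⟩² - ⟨x, x⟩⟨y, y⟩ = (x₁y₂ - x₂y₁)²` together with `⟨x, y⟩ > 0`. Expanding
`‖x + y‖_h² = ‖x‖_h² + 2⟨x, y⟩ + ‖y‖_h²` then gives the reversed triangle inequality, with
equality exactly when `x₁y₂ = x₂y₁`, i.e. when `y` is a positive multiple of `x`.
-/

def minkowskiInner (p q : ℝ × ℝ) : ℝ := p.1 * q.1 - p.2 * q.2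

lemma minkowskiInner_self (p : ℝ × ℝ) : minkowskiInner p p = p.1 ^ 2 - p.2 ^ 2 := by
  unfold minkowskiInner; ring

lemma minkowskiInner_add_self (p q : ℝ × ℝ) :
    minkowskiInner (p + q) (p + q) =
      minkowskiInner p p + 2 * minkowskiInner p q + minkowskiInner q q := by
  simp only [minkowskiInner, Prod.fst_add, Prod.snd_add]; ring

lemma minkowskiInner_sq_sub_mul (p q : ℝ × ℝ) :
    minkowskiInner p q ^ 2 - minkowskiInner p p * minkowskiInner q q =
      (p.1 * q.2 - p.2 * q.1) ^ 2 := by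
  unfold minkowskiInner; ring

lemma hnorm_nonneg (p : ℝ × ℝ) : 0 ≤ hnorm p := Real.sqrt_nonneg _

lemma sq_hnorm_of_nonneg {p : ℝ × ℝ} (hp : 0 ≤ minkowskiInner p p) :
    hnorm p ^ 2 = minkowskiInner p p := by
  rw [hnorm, ← minkowskiInner_self, abs_of_nonneg hp, Real.sq_sqrt hp]

lemma futureSpacelike_iff_abs_snd_lt_fst {p : ℝ × ℝ} : FutureSpacelike p ↔ |p.2| < p.1 := by
  refine ⟨fun ⟨hsq, hpos⟩ ↦ abs_lt_of_sq_lt_sq (by linarith) hpos.le, fun h ↦ ?_⟩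
  have hpos : 0 < p.1 := (abs_nonneg _).trans_lt h
  refine ⟨?_, hpos⟩
  rw [sub_pos, sq_lt_sq, abs_of_pos hpos]
  exact h

namespace FutureSpacelike

variable {p q : ℝ × ℝ}

lemma minkowskiInner_self_pos (hp : FutureSpacelike p) : 0 < minkowskiInner p p := by
  rw [minkowskiInner_self]; exact hp.1

lemma add (hp : FutureSpacelike p) (hq : FutureSpacelike q) : FutureSpacelike (p + q) := by
  rw [futureSpacelike_iff_abs_snd_lt_fst] at *
  calc |(p + q).2| ≤ |p.2| + |q.2| := abs_add_le _ _
    _ < p.1 + q.1 := add_lt_add hp hq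

lemma minkowskiInner_pos (hp : FutureSpacelike p) (hq : FutureSpacelike q) :
    0 < minkowskiInner p q := by
  rw [futureSpacelike_iff_abs_snd_lt_fst] at hp hq
  have : p.2 * q.2 < p.1 * q.1 :=
    calc p.2 * q.2 ≤ |p.2| * |q.2| := by rw [← abs_mul]; exact le_abs_self _
      _ < p.1 * q.1 := mul_lt_mul'' hp hq (abs_nonneg _) (abs_nonneg _)
  unfold minkowskiInner; linarith

end FutureSpacelike

lemma sq_minkowskiInner_sub_sq_hnorm_mul {p q : ℝ × ℝ} (hp : 0 ≤ minkowskiInner p p)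
    (hq : 0 ≤ minkowskiInner q q) :
    minkowskiInner p q ^ 2 - (hnorm p * hnorm q) ^ 2 = (p.1 * q.2 - p.2 * q.1) ^ 2 := by
  rw [mul_pow, sq_hnorm_of_nonneg hp, sq_hnorm_of_nonneg hq, minkowskiInner_sq_sub_mul]

lemma hnorm_mul_hnorm_le_minkowskiInner {p q : ℝ × ℝ} (hp : 0 ≤ minkowskiInner p p)
    (hq : 0 ≤ minkowskiInner q q) (hpq : 0 ≤ minkowskiInner p q) :
    hnorm p * hnorm q ≤ minkowskiInner p q := by
  rw [← pow_le_pow_iff_left₀ (mul_nonneg (hnorm_nonneg p) (hnorm_nonneg q)) hpq two_ne_zero]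
  linarith [sq_minkowskiInner_sub_sq_hnorm_mul hp hq, sq_nonneg (p.1 * q.2 - p.2 * q.1)]

lemma hnorm_mul_hnorm_eq_minkowskiInner_iff {p q : ℝ × ℝ} (hp : 0 ≤ minkowskiInner p p)
    (hq : 0 ≤ minkowskiInner q q) (hpq : 0 ≤ minkowskiInner p q) :
    hnorm p * hnorm q = minkowskiInner p q ↔ p.1 * q.2 = p.2 * q.1 := by
  calc hnorm p * hnorm q = minkowskiInner p q
        ↔ (hnorm p * hnorm q) ^ 2 = minkowskiInner p q ^ 2 :=
          (pow_left_inj₀ (mul_nonneg (hnorm_nonneg p) (hnorm_nonneg q)) hpq two_ne_zero).symm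
    _ ↔ (p.1 * q.2 - p.2 * q.1) ^ 2 = 0 := by
          rw [← sq_minkowskiInner_sub_sq_hnorm_mul hp hq, sub_eq_zero, eq_comm]
    _ ↔ p.1 * q.2 = p.2 * q.1 := by rw [sq_eq_zero_iff, sub_eq_zero]

lemma exists_pos_smul_eq_iff {p q : ℝ × ℝ} (hp : 0 < p.1) (hq : 0 < q.1) :
    (∃ c : ℝ, 0 < c ∧ q = c • p) ↔ p.1 * q.2 = p.2 * q.1 := by
  constructor
  · rintro ⟨c, -, rfl⟩
    simp only [Prod.smul_fst, Prod.smul_snd, smul_eq_mul]; ring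
  · intro h
    refine ⟨q.1 / p.1, div_pos hq hp, Prod.ext ?_ ?_⟩
    · simp only [Prod.smul_fst, smul_eq_mul]; field_simp
    · simp only [Prod.smul_snd, smul_eq_mul]; field_simp; linarith

theorem reversed_triangle_inequality_spacelike
    (x y : ℝ × ℝ) (hx : FutureSpacelike x) (hy : FutureSpacelike y) :
    FutureSpacelike (x + y) ∧
    hnorm (x + y) ≥ hnorm x + hnorm y ∧
    (hnorm (x + y) = hnorm x + hnorm y ↔ ∃ c : ℝ, 0 < c ∧ y = c • x) := by
  have hxy := hx.add hy
  have hxx := hx.minkowskiInner_self_pos.le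
  have hyy := hy.minkowskiInner_self_pos.le
  have hinner := (hx.minkowskiInner_pos hy).le
  have hexpand : hnorm (x + y) ^ 2 - (hnorm x + hnorm y) ^ 2 =
      2 * (minkowskiInner x y - hnorm x * hnorm y) := by
    rw [add_sq, sq_hnorm_of_nonneg hxy.minkowskiInner_self_pos.le, sq_hnorm_of_nonneg hxx,
      sq_hnorm_of_nonneg hyy, minkowskiInner_add_self]
    ring
  have hsum := add_nonneg (hnorm_nonneg x) (hnorm_nonneg y)
  refine ⟨hxy, ?_, ?_⟩
  · rw [ge_iff_le, ← pow_le_pow_iff_left₀ hsum (hnorm_nonneg _) two_ne_zero]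
    linarith [hnorm_mul_hnorm_le_minkowskiInner hxx hyy hinner]
  · rw [exists_pos_smul_eq_iff hx.2 hy.2, ← hnorm_mul_hnorm_eq_minkowskiInner_iff hxx hyy hinner,
      ← pow_left_inj₀ (hnorm_nonneg _) hsum two_ne_zero]
    constructor <;> intro h <;> linarith
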